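/- Assume 0 < μ_1 (the focusing case) and let β̄ be the unique zero of g in (−∞, μ_1). Then for every β ∈ ℝ \ {μ_1, …, μ_n}, one has (β − μ_j)·g(β) > 0 for all j = 1, …, n if and only if β < β̄. -/

import Mathlib

/-!
Writing `x * ∑ 1 / (μⱼ - x) = ∑ x / (μⱼ - x)`, each summand is strictly increasing on `x < μⱼ`
when `μⱼ > 0`, so `g` is strictly increasing on `(-∞, μ₁)` and the sign of `g β` there is the sign
of `β - β̄`. To the right of all `μⱼ` each summand is below `-1`, so `g < 0` there; this rules out
`β > μₙ`, the only other place where all the factors `β - μⱼ` share the sign of `g β`.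
-/

open Set Finset

section Secular

variable {ι : Type*} [Fintype ι] {μ : ι → ℝ}

lemma div_sub_self_strictMonoOn {m : ℝ} (hm : 0 < m) :
    StrictMonoOn (fun x : ℝ => x / (m - x)) (Iio m) := by
  intro x hx y hy hxy
  have hx' : 0 < m - x := sub_pos.mpr hx
  have hy' : 0 < m - y := sub_pos.mpr hy
  rw [div_lt_div_iff₀ hx' hy']
  nlinarith

lemma div_sub_self_lt_neg_one {m x : ℝ} (hm : 0 < m) (hx : m < x) : x / (m - x) < -1 := by
  rw [div_lt_iff_of_neg (sub_neg.mpr hx)]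
  linarith

lemma mul_sum_one_div_sub (x : ℝ) : x * ∑ j, 1 / (μ j - x) = ∑ j, x / (μ j - x) := by
  simp only [Finset.mul_sum, mul_one_div]

lemma secular_strictMonoOn [Nonempty ι] (hμ : ∀ j, 0 < μ j) {m : ℝ} (hm : ∀ j, m ≤ μ j) :
    StrictMonoOn (fun x => 1 + x * ∑ j, 1 / (μ j - x)) (Iio m) := by
  intro x hx y hy hxy
  simp only [mul_sum_one_div_sub, add_lt_add_iff_left]
  exact Finset.sum_lt_sum_of_nonempty univ_nonempty fun j _ =>
    div_sub_self_strictMonoOn (hμ j) (lt_of_lt_of_le hx (hm j)) (lt_of_lt_of_le hy (hm j)) hxy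

lemma secular_neg_of_forall_lt [Nonempty ι] (hμ : ∀ j, 0 < μ j) {x : ℝ} (hx : ∀ j, μ j < x) :
    1 + x * ∑ j, 1 / (μ j - x) < 0 := by
  have hsum : ∑ j, x / (μ j - x) < ∑ _j : ι, (-1 : ℝ) :=
    Finset.sum_lt_sum_of_nonempty univ_nonempty fun j _ => div_sub_self_lt_neg_one (hμ j) (hx j)
  have hcard : (1 : ℝ) ≤ Fintype.card ι := by exact_mod_cast Fintype.card_pos
  simp only [sum_const, card_univ, nsmul_eq_mul, mul_neg, mul_one] at hsum
  rw [mul_sum_one_div_sub]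
  linarith

end Secular

/-- Focusing case: the positivity condition `(β - μⱼ)·g(β) > 0` for all `j` holds
precisely for `β < β̄`, where `β̄` is the unique zero of `g` in `(-∞, μ₁)`. -/
theorem focusing_branch_interval (n : ℕ) (hn : 2 ≤ n) (μ : Fin n → ℝ) (hμ : Monotone μ)
    (g : ℝ → ℝ)
    (hg : ∀ β : ℝ, (∀ j, β ≠ μ j) → g β = 1 + β * ∑ j, 1 / (μ j - β))
    (hfoc : 0 < μ ⟨0, by omega⟩)
    (βb : ℝ) (hβb : βb < μ ⟨0, by omega⟩) (hzero : g βb = 0)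
    (β : ℝ) (hβ : ∀ j, β ≠ μ j) :
    (∀ j, 0 < (β - μ j) * g β) ↔ β < βb := by
  set j₀ : Fin n := ⟨0, by omega⟩
  have : Nonempty (Fin n) := ⟨j₀⟩
  have hle : ∀ j, μ j₀ ≤ μ j := fun j => hμ (Fin.le_def.mpr (Nat.zero_le _))
  have hpos : ∀ j, 0 < μ j := fun j => hfoc.trans_le (hle j)
  have hmono : StrictMonoOn g (Iio (μ j₀)) :=
    (secular_strictMonoOn hpos hle).congr fun x hx =>
      (hg x fun j => (lt_of_lt_of_le hx (hle j)).ne).symm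
  have hβb_mem : βb ∈ Iio (μ j₀) := hβb
  constructor
  · intro H
    rcases (hβ j₀).lt_or_gt with hlt | hgt
    · have hgβ : g β < 0 := neg_of_mul_pos_right (H j₀) (sub_neg.mpr hlt).le
      exact (hmono.lt_iff_lt hlt hβb_mem).mp (hzero ▸ hgβ)
    · have hgβ : 0 < g β := pos_of_mul_pos_right (H j₀) (sub_pos.mpr hgt).le
      have habove : ∀ j, μ j < β := fun j => sub_pos.mp (pos_of_mul_pos_left (H j) hgβ.le)
      exact absurd (hg β hβ ▸ hgβ) (secular_neg_of_forall_lt hpos habove).not_gt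
  · intro hlt j
    have hβ_mem : β < μ j₀ := hlt.trans hβb
    have hgβ : g β < 0 := hzero ▸ (hmono.lt_iff_lt hβ_mem hβb_mem).mpr hlt
    exact mul_pos_of_neg_of_neg (sub_neg.mpr (hβ_mem.trans_le (hle j))) hgβ
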